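/- arXiv:1412.0447 — 2 statements merged into one kernel-verified Lean document; each statement's English description precedes it below -/
import Mathlib

section
/- For every x ∈ X, the orbit map induces a homeomorphism from the quotient space G/G_x (where G_x is the stabilizer of x) onto the orbit G · x equipped with the subspace topology from τ(X,G). -/
/-!
The orbit map `g ↦ g • x` is open for `τ(X, G)` by the very choice of basis, and continuous
because the preimage of a basic open set `U • y` contains, around each of its points `g₀`, a
right translate of `U`. Its fibres are the cosets of `G_x`, so it descends to a continuous open
bijection `G ⧸ G_x → G • x`.
-/

open TopologicalSpace Topology

namespace MulAction

variable {G X : Type*} [Group G] [TopologicalSpace G] [MulAction G X]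

section OrbitMap

variable [TopologicalSpace X] (x : X)

noncomputable def quotientStabilizerHomeomorphOrbit (hc : Continuous (· • x : G → X))
    (ho : IsOpenMap (· • x : G → X)) : G ⧸ stabilizer G x ≃ₜ orbit G x :=
  have hmk := QuotientGroup.isQuotientMap_mk (stabilizer G x)
  have hfactor : (orbitEquivQuotientStabilizer G x).symm ∘ QuotientGroup.mk =
      fun g : G ↦ (⟨g • x, mem_orbit x g⟩ : orbit G x) :=
    funext fun g ↦ Subtype.ext (orbitEquivQuotientStabilizer_symm_apply G x g)
  (orbitEquivQuotientStabilizer G x).symm.toHomeomorphOfContinuousOpen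
    (hmk.continuous_iff.mpr <| hfactor ▸ hc.subtype_mk _)
    (.of_comp hmk.continuous QuotientGroup.mk_surjective <| hfactor ▸ ho.subtype_mk _)

@[simp]
lemma quotientStabilizerHomeomorphOrbit_mk (hc : Continuous (· • x : G → X))
    (ho : IsOpenMap (· • x : G → X)) (g : G) :
    (quotientStabilizerHomeomorphOrbit x hc ho g : X) = g • x :=
  orbitEquivQuotientStabilizer_symm_apply G x g

end OrbitMap

variable (G X) in
/-- The topology `τ(X, G)`. -/
abbrev orbitTopology : TopologicalSpace X :=
  generateFrom {s : Set X | ∃ (U : Set G) (x : X), IsOpen U ∧ s = (· • x) '' U}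

lemma isOpenMap_smul_const_orbitTopology (x : X) :
    @IsOpenMap G X _ (orbitTopology G X) (· • x) :=
  fun U hU ↦ GenerateOpen.basic _ ⟨U, x, hU, rfl⟩

lemma continuous_smul_const_orbitTopology [SeparatelyContinuousMul G] (x : X) :
    Continuous[_, orbitTopology G X] (· • x : G → X) := by
  refine continuous_generateFrom_iff.mpr ?_
  rintro _ ⟨U, y, hU, rfl⟩
  refine isOpen_iff_forall_mem_open.mpr ?_
  rintro g₀ ⟨u₀, hu₀, hg₀⟩
  -- `g₀ • x = u₀ • y`, so the right translate `U * (u₀⁻¹ * g₀)` is sent into `U • y`.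
  refine ⟨(· * (u₀⁻¹ * g₀)) '' U, ?_, isOpenMap_mul_right _ U hU, u₀, hu₀,
    mul_inv_cancel_left _ _⟩
  rintro _ ⟨u, hu, rfl⟩
  refine ⟨u, hu, ?_⟩
  simp only [mul_smul, ← hg₀, inv_smul_smul]

end MulAction

theorem quotient_homeomorph_orbit {G X : Type*} [Group G] [TopologicalSpace G]
    [IsTopologicalGroup G] [MulAction G X] (x : X) :
    letI : TopologicalSpace X :=
      generateFrom {s : Set X | ∃ (U : Set G) (x : X), IsOpen U ∧ s = (· • x) '' U}
    ∃ f : (G ⧸ MulAction.stabilizer G x) ≃ₜ MulAction.orbit G x,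
      ∀ g : G, (f (QuotientGroup.mk g) : X) = g • x :=
  letI := MulAction.orbitTopology G X
  ⟨MulAction.quotientStabilizerHomeomorphOrbit x
      (MulAction.continuous_smul_const_orbitTopology x)
      (MulAction.isOpenMap_smul_const_orbitTopology x),
    MulAction.quotientStabilizerHomeomorphOrbit_mk x _ _⟩
end

section
/- Define λ(H,G) to be the topology on H in which U is open iff for all h₁,h₂ ∈ H the sets h₁Uh₂ and h₁U⁻¹h₂ are open in τ(H,G). Then with H equipped with λ(H,G): the action of G on H is separately continuous, inversion on H is continuous, and multiplication on H is separately continuous; moreover λ(H,G) is the finest topology on H with these three properties. -/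
open TopologicalSpace Topology
open scoped Pointwise

/-!
Both sets of maps in the definition of `λ(H,G)` are bijections, so `λ(H,G)` is the topology whose
open sets are those `U` with `φ⁻¹' U` open in `τ(H,G)` for every two-sided translation
`φ x = a * x * b` or `φ x = a * x⁻¹ * b`. These maps form a monoid under composition, which is
why each of them is `λ`-continuous, and this monoid is normalized by every automorphism `g • ·`,
which is already `τ`-continuous. Conversely, a topology in which every orbit map `g ↦ g • h` is continuous
is coarser than `τ(H,G)`, and if the translations and the inversion are continuous in it, then it
is also coarser than `λ(H,G)`.
-/

section SupCoinduced

variable {X : Type*} {M : Set (X → X)} {τ : TopologicalSpace X}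

/-- The finest topology coarser than `τ` in which every map of `M` is continuous, provided `M` is
a monoid under composition. -/
abbrev supCoinduced (M : Set (X → X)) (τ : TopologicalSpace X) : TopologicalSpace X :=
  ⨆ φ ∈ M, τ.coinduced φ

lemma isOpen_supCoinduced_iff {s : Set X} :
    IsOpen[supCoinduced M τ] s ↔ ∀ φ ∈ M, IsOpen[τ] (φ ⁻¹' s) := by
  simp only [isOpen_iSup_iff, isOpen_coinduced]

lemma le_supCoinduced (hid : id ∈ M) : τ ≤ supCoinduced M τ := by
  simpa only [coinduced_id] using le_iSup₂ (f := fun φ (_ : φ ∈ M) => τ.coinduced φ) id hid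

lemma continuous_supCoinduced_of_mem (hcomp : ∀ φ ∈ M, ∀ ψ ∈ M, ψ ∘ φ ∈ M) {ψ : X → X}
    (hψ : ψ ∈ M) : Continuous[supCoinduced M τ, supCoinduced M τ] ψ := by
  refine continuous_def.2 fun U hU => isOpen_supCoinduced_iff.2 fun φ hφ => ?_
  exact isOpen_supCoinduced_iff.1 hU (ψ ∘ φ) (hcomp φ hφ ψ hψ)

lemma continuous_supCoinduced_of_semiconj {σ : X → X} (hσ : Continuous[τ, τ] σ)
    (hM : ∀ φ ∈ M, ∃ φ' ∈ M, σ ∘ φ = φ' ∘ σ) :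
    Continuous[supCoinduced M τ, supCoinduced M τ] σ := by
  refine continuous_def.2 fun U hU => isOpen_supCoinduced_iff.2 fun φ hφ => ?_
  obtain ⟨φ', hφ', hcomm⟩ := hM φ hφ
  rw [← Set.preimage_comp, hcomm, Set.preimage_comp]
  exact continuous_def.1 hσ _ (isOpen_supCoinduced_iff.1 hU φ' hφ')

lemma supCoinduced_le {t : TopologicalSpace X} (hτt : τ ≤ t)
    (ht : ∀ φ ∈ M, Continuous[t, t] φ) : supCoinduced M τ ≤ t :=
  iSup₂_le fun φ hφ =>
    coinduced_le_iff_le_induced.2 (hτt.trans (continuous_iff_le_induced.1 (ht φ hφ)))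

end SupCoinduced

section OrbitTopology

/-- The topology `τ(H,G)`. -/
abbrev orbitTopology (G H : Type*) [Group G] [TopologicalSpace G] [MulAction G H] :
    TopologicalSpace H :=
  generateFrom {s : Set H | ∃ (U : Set G) (h : H), IsOpen U ∧ s = (· • h) '' U}

variable {G H : Type*} [Group G] [TopologicalSpace G] [MulAction G H]

lemma isOpen_orbitTopology_image {U : Set G} (hU : IsOpen U) (h : H) :
    IsOpen[orbitTopology G H] ((· • h) '' U) :=
  isOpen_generateFrom_of_mem ⟨U, h, hU, rfl⟩

lemma orbitTopology_le_of_continuous {t : TopologicalSpace H}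
    (ht : ∀ h : H, Continuous[_, t] (fun g : G => g • h)) : orbitTopology G H ≤ t := by
  intro V hV
  refine @isOpen_iff_forall_mem_open H (orbitTopology G H) V |>.2 fun x hx => ?_
  refine ⟨(· • x) '' ((· • x) ⁻¹' V), ?_, ?_, 1, by simpa using hx, one_smul G x⟩
  · exact Set.image_preimage_subset _ V
  · exact isOpen_orbitTopology_image (continuous_def.1 (ht x) V hV) x

variable [ContinuousMul G]

lemma continuous_smul_orbitTopology (g : G) :
    Continuous[orbitTopology G H, orbitTopology G H] (fun h : H => g • h) := by
  refine continuous_generateFrom_iff.2 ?_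
  rintro s ⟨U, h, hU, rfl⟩
  have hpre : (g • ·) ⁻¹' ((· • h) '' U) = (· • h) '' ((g * ·) ⁻¹' U) := by
    ext x
    simp only [Set.mem_preimage, Set.mem_image]
    constructor
    · rintro ⟨u, hu, hx⟩
      exact ⟨g⁻¹ * u, by simpa using hu, by rw [mul_smul, hx, inv_smul_smul]⟩
    · rintro ⟨w, hw, rfl⟩
      exact ⟨g * w, hw, mul_smul g w h⟩
  rw [hpre]
  exact isOpen_orbitTopology_image (hU.preimage (continuous_const_mul g)) h

lemma continuous_orbit_orbitTopology (h : H) :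
    Continuous[_, orbitTopology G H] (fun g : G => g • h) := by
  refine continuous_generateFrom_iff.2 ?_
  rintro s ⟨U, k, hU, rfl⟩
  -- `g • h = u • k` exactly when `u⁻¹ * g` moves `h` to `k`.
  have hpre : (· • h) ⁻¹' ((· • k) '' U) = U * {w : G | w • h = k} := by
    ext g
    simp only [Set.mem_preimage, Set.mem_image, Set.mem_mul, Set.mem_ofPred_eq]
    constructor
    · rintro ⟨u, hu, hg⟩
      exact ⟨u, hu, u⁻¹ * g, by rw [mul_smul, ← hg, inv_smul_smul], mul_inv_cancel_left u g⟩
    · rintro ⟨u, hu, w, rfl, rfl⟩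
      exact ⟨u, hu, (mul_smul u w h).symm⟩
  rw [hpre]
  exact hU.mul_right

end OrbitTopology

section Bitranslations

variable {H : Type*} [Group H]

def bitranslations (H : Type*) [Group H] : Set (H → H) :=
  {φ | ∃ a b : H, φ = (fun x => a * x * b) ∨ φ = (fun x => a * x⁻¹ * b)}

lemma id_mem_bitranslations : (id : H → H) ∈ bitranslations H :=
  ⟨1, 1, .inl (funext fun x => by simp)⟩

lemma mul_left_mem_bitranslations (h : H) : (h * ·) ∈ bitranslations H :=
  ⟨h, 1, .inl (funext fun x => by simp)⟩

lemma mul_right_mem_bitranslations (h : H) : (· * h) ∈ bitranslations H :=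
  ⟨1, h, .inl (funext fun x => by simp)⟩

lemma inv_mem_bitranslations : (fun x : H => x⁻¹) ∈ bitranslations H :=
  ⟨1, 1, .inr (funext fun x => by simp)⟩

lemma comp_mem_bitranslations :
    ∀ φ ∈ bitranslations H, ∀ ψ ∈ bitranslations H, ψ ∘ φ ∈ bitranslations H := by
  rintro _ ⟨a, b, rfl | rfl⟩ _ ⟨c, d, rfl | rfl⟩
  · exact ⟨c * a, b * d, .inl (funext fun x => by simp only [Function.comp_apply]; group)⟩
  · exact ⟨c * b⁻¹, a⁻¹ * d, .inr (funext fun x => by simp only [Function.comp_apply]; group)⟩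
  · exact ⟨c * a, b * d, .inr (funext fun x => by simp only [Function.comp_apply]; group)⟩
  · exact ⟨c * b⁻¹, a⁻¹ * d, .inl (funext fun x => by simp only [Function.comp_apply]; group)⟩

lemma exists_bitranslations_semiconj_smul {G : Type*} [Monoid G] [MulDistribMulAction G H]
    (g : G) : ∀ φ ∈ bitranslations H,
      ∃ φ' ∈ bitranslations H, (g • ·) ∘ φ = φ' ∘ (g • ·) := by
  rintro _ ⟨a, b, rfl | rfl⟩
  · exact ⟨_, ⟨g • a, g • b, .inl rfl⟩, funext fun x => by simp [smul_mul']⟩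
  · exact ⟨_, ⟨g • a, g • b, .inr rfl⟩, funext fun x => by simp [smul_mul', smul_inv']⟩

lemma image_mul_mul (a b : H) (U : Set H) :
    (fun x => a * x * b) '' U = (fun x => a⁻¹ * x * b⁻¹) ⁻¹' U :=
  congrFun (Set.image_eq_preimage_of_inverse (fun x => by group) (fun x => by group)) U

lemma image_mul_inv_mul (a b : H) (U : Set H) :
    (fun x => a * x⁻¹ * b) '' U = (fun x => b * x⁻¹ * a) ⁻¹' U :=
  congrFun (Set.image_eq_preimage_of_inverse (fun x => by group) (fun x => by group)) U

lemma forall_isOpen_preimage_bitranslations_iff [TopologicalSpace H] {U : Set H} :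
    (∀ φ ∈ bitranslations H, IsOpen (φ ⁻¹' U)) ↔
      ∀ h₁ h₂ : H, IsOpen ((fun u => h₁ * u * h₂) '' U) ∧
        IsOpen ((fun u => h₁ * u⁻¹ * h₂) '' U) := by
  constructor
  · intro hU h₁ h₂
    rw [image_mul_mul, image_mul_inv_mul]
    exact ⟨hU _ ⟨_, _, .inl rfl⟩, hU _ ⟨_, _, .inr rfl⟩⟩
  · rintro hU _ ⟨a, b, rfl | rfl⟩
    · simpa only [image_mul_mul, inv_inv] using (hU a⁻¹ b⁻¹).1
    · simpa only [image_mul_inv_mul] using (hU b a).2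

lemma continuous_of_mem_bitranslations {t : TopologicalSpace H}
    (hinv : Continuous[t, t] fun h : H => h⁻¹) (hleft : ∀ h : H, Continuous[t, t] (h * ·))
    (hright : ∀ h : H, Continuous[t, t] (· * h)) :
    ∀ φ ∈ bitranslations H, Continuous[t, t] φ := by
  rintro _ ⟨a, b, rfl | rfl⟩
  · exact (hright b).comp (hleft a)
  · exact (hright b).comp ((hleft a).comp hinv)

end Bitranslations

/-- The topology `λ(H,G)` (whose open sets are those `U` with all translates `h₁Uh₂` and
`h₁U⁻¹h₂` open in `τ(H,G)`) makes the action of `G` separately continuous, the inversion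
continuous and the multiplication separately continuous, and it is the finest topology on `H`
with these properties. -/
theorem lambda_topology_properties {G H : Type*} [Group G] [TopologicalSpace G]
    [IsTopologicalGroup G] [Group H] [MulDistribMulAction G H] :
    letI τ : TopologicalSpace H :=
      generateFrom {s : Set H | ∃ (U : Set G) (h : H), IsOpen U ∧ s = (· • h) '' U}
    ∃ lam : TopologicalSpace H,
      (∀ U : Set H, IsOpen[lam] U ↔ ∀ h₁ h₂ : H,
          IsOpen[τ] ((fun u => h₁ * u * h₂) '' U) ∧
          IsOpen[τ] ((fun u => h₁ * u⁻¹ * h₂) '' U)) ∧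
      (∀ g : G, @Continuous H H lam lam (fun h => g • h)) ∧
      (∀ h : H, @Continuous G H _ lam (fun g : G => g • h)) ∧
      (@Continuous H H lam lam fun h => h⁻¹) ∧
      (∀ h : H, @Continuous H H lam lam fun x => h * x) ∧
      (∀ h : H, @Continuous H H lam lam fun x => x * h) ∧
      ∀ t : TopologicalSpace H,
        ((∀ g : G, @Continuous H H t t (fun h => g • h)) ∧
          (∀ h : H, @Continuous G H _ t (fun g : G => g • h)) ∧
          (@Continuous H H t t fun h => h⁻¹) ∧
          (∀ h : H, @Continuous H H t t fun x => h * x) ∧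
          (∀ h : H, @Continuous H H t t fun x => x * h)) →
        lam ≤ t := by
  let τ := orbitTopology G H
  have hmem := @continuous_supCoinduced_of_mem _ _ τ comp_mem_bitranslations
  refine ⟨supCoinduced (bitranslations H) τ,
    fun U => isOpen_supCoinduced_iff.trans forall_isOpen_preimage_bitranslations_iff,
    fun g => continuous_supCoinduced_of_semiconj (continuous_smul_orbitTopology g)
      (exists_bitranslations_semiconj_smul g),
    fun h => continuous_le_rng (le_supCoinduced id_mem_bitranslations)
      (continuous_orbit_orbitTopology h),
    hmem inv_mem_bitranslations,
    fun h => hmem (mul_left_mem_bitranslations h),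
    fun h => hmem (mul_right_mem_bitranslations h), ?_⟩
  rintro t ⟨-, horbit, hinv, hleft, hright⟩
  exact supCoinduced_le (orbitTopology_le_of_continuous horbit)
    (continuous_of_mem_bitranslations hinv hleft hright)
end
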